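/- For the random tribonacci substitution τ: a ↦ {ab, ba}, b ↦ {ac, ca}, c ↦ {a}, every word in τⁿ(a) has length t_{n+2}, every word in τⁿ(b) has length t_n + t_{n+1}, and every word in τⁿ(c) has length t_{n+1}, where t is the tribonacci sequence (t_0 = 0, t_1 = t_2 = 1, t_n = t_{n-1} + t_{n-2} + t_{n-3}). -/

import Mathlib

inductive ABC : Type
  | a : ABC
  | b : ABC
  | c : ABC
deriving DecidableEq

def substW (θ : ABC → Set (List ABC)) : List ABC → Set (List ABC)
  | [] => {[]}
  | x :: w => {u | ∃ v ∈ θ x, ∃ t ∈ substW θ w, u = v ++ t}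

def substS (θ : ABC → Set (List ABC)) (A : Set (List ABC)) : Set (List ABC) :=
  ⋃ w ∈ A, substW θ w

def substIter (θ : ABC → Set (List ABC)) (n : ℕ) (x : ABC) : Set (List ABC) :=
  (substS θ)^[n] {[x]}

def randTrib : ABC → Set (List ABC)
  | ABC.a => {[ABC.a, ABC.b], [ABC.b, ABC.a]}
  | ABC.b => {[ABC.a, ABC.c], [ABC.c, ABC.a]}
  | ABC.c => {[ABC.a]}

def trib : ℕ → ℕ
  | 0 => 0
  | 1 => 1
  | 2 => 1
  | n + 3 => trib (n + 2) + trib (n + 1) + trib n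

/-!
Assign the letter `x` at level `n` a weight `f n x` such that every word in `θ x` has total
`f n`-weight `f (n + 1) x`. Weights add under concatenation, so peeling off one substitution
step at a time shows that every word in `θⁿ(x)` has total `f 0`-weight `f n x`. For the
tribonacci substitution the weights `a ↦ tₙ₊₂`, `b ↦ tₙ + tₙ₊₁`, `c ↦ tₙ₊₁` have this property
by the tribonacci recurrence, and at level `0` they are all `1`, so `f 0`-weight is length.
-/

section Weights

variable {M : Type*} [AddMonoid M] {θ : ABC → Set (List ABC)}

theorem sum_map_of_mem_substW {f g : ABC → M} (h : ∀ x, ∀ v ∈ θ x, (v.map f).sum = g x) :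
    ∀ {w u : List ABC}, u ∈ substW θ w → (u.map f).sum = (w.map g).sum
  | [], u, hu => by
    rw [substW, Set.mem_singleton_iff] at hu
    simp [hu]
  | x :: w, _, ⟨v, hv, t, ht, hu⟩ => by
    rw [hu, List.map_append, List.sum_append, h x v hv, sum_map_of_mem_substW h ht,
      List.map_cons, List.sum_cons]

theorem exists_sum_map_of_mem_iterate_substS {f : ℕ → ABC → M}
    (h : ∀ n x, ∀ v ∈ θ x, (v.map (f n)).sum = f (n + 1) x) (n : ℕ) {A : Set (List ABC)}
    {u : List ABC} (hu : u ∈ (substS θ)^[n] A) :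
    ∃ w ∈ A, (u.map (f 0)).sum = (w.map (f n)).sum := by
  induction n generalizing A with
  | zero => exact ⟨u, hu, rfl⟩
  | succ n ih =>
    rw [Function.iterate_succ_apply] at hu
    obtain ⟨v, hv, hu_v⟩ := ih hu
    obtain ⟨w, hw, hv_w⟩ := Set.mem_iUnion₂.mp hv
    exact ⟨w, hw, hu_v.trans (sum_map_of_mem_substW (h n) hv_w)⟩

theorem sum_map_of_mem_substIter {f : ℕ → ABC → M}
    (h : ∀ n x, ∀ v ∈ θ x, (v.map (f n)).sum = f (n + 1) x) {n : ℕ} {x : ABC}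
    {u : List ABC} (hu : u ∈ substIter θ n x) :
    (u.map (f 0)).sum = f n x := by
  obtain ⟨w, hw, hu_w⟩ := exists_sum_map_of_mem_iterate_substS h n hu
  rw [Set.mem_singleton_iff] at hw
  simp [hu_w, hw]

end Weights

def tribWeight (n : ℕ) : ABC → ℕ
  | ABC.a => trib (n + 2)
  | ABC.b => trib n + trib (n + 1)
  | ABC.c => trib (n + 1)

theorem tribWeight_zero : tribWeight 0 = fun _ => 1 := by
  funext x
  cases x <;> rfl

theorem sum_map_tribWeight_of_mem_randTrib (n : ℕ) (x : ABC) :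
    ∀ v ∈ randTrib x, (v.map (tribWeight n)).sum = tribWeight (n + 1) x := by
  have h₂ : trib (n + 1 + 1) = trib (n + 2) := rfl
  have h₃ : trib (n + 1 + 2) = trib (n + 2) + trib (n + 1) + trib n := rfl
  cases x <;>
    simp only [randTrib, tribWeight, h₂, h₃, Set.mem_insert_iff, Set.mem_singleton_iff,
      forall_eq_or_imp, forall_eq, List.map_cons, List.map_nil, List.sum_cons, List.sum_nil] <;>
    omega

/-- Lengths of level-`n` inflation words of the random tribonacci substitution. -/
theorem randTrib_inflation_lengths (n : ℕ) :
    (∀ w ∈ substIter randTrib n ABC.a, w.length = trib (n + 2)) ∧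
    (∀ w ∈ substIter randTrib n ABC.b, w.length = trib n + trib (n + 1)) ∧
    (∀ w ∈ substIter randTrib n ABC.c, w.length = trib (n + 1)) := by
  have length_eq (x : ABC) (w : List ABC) (hw : w ∈ substIter randTrib n x) :
      w.length = tribWeight n x := by
    simpa [tribWeight_zero] using sum_map_of_mem_substIter sum_map_tribWeight_of_mem_randTrib hw
  exact ⟨length_eq ABC.a, length_eq ABC.b, length_eq ABC.c⟩
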